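/- Progress for the effect system: If Δ ⊢ M : A | ε in the type-and-effect system of λ_eff^ext, then (i) M ⟶ M' for some M'; or (ii) M is a value; or (iii) M = E[#op(v)] for some evaluation context E, operation op and value v such that op ∉ E and op ∈ ε. -/
import Mathlib


set_option maxHeartbeats 1000000

namespace SigResEff

/-! ## Effects and types of the type-and-effect system for λ_eff^ext -/

/-- An effect is a finite set of operations. -/
abbrev Effect := Finset ℕ

/-- Types: type variables, base types, effect-annotated function types,
universal, product, sum, list. -/
inductive Ty : Type where
  | var  : ℕ → Ty
  | base : ℕ → Ty
  | fn   : Ty → Effect → Ty → Ty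
  | all  : ℕ → Ty → Ty
  | prod : Ty → Ty → Ty
  | sum  : Ty → Ty → Ty
  | list : Ty → Ty

/-- Free type variables. -/
def ftv : Ty → Finset ℕ
  | Ty.var a     => {a}
  | Ty.base _    => ∅
  | Ty.fn A _ B  => ftv A ∪ ftv B
  | Ty.all a A   => ftv A \ {a}
  | Ty.prod A B  => ftv A ∪ ftv B
  | Ty.sum A B   => ftv A ∪ ftv B
  | Ty.list A    => ftv A

/-- Simultaneous type substitution by a map (binders shadow). -/
def substMap : (ℕ → Ty) → Ty → Ty
  | σ, Ty.var a     => σ a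
  | _, Ty.base i    => Ty.base i
  | σ, Ty.fn A ε B  => Ty.fn (substMap σ A) ε (substMap σ B)
  | σ, Ty.all a A   => Ty.all a (substMap (Function.update σ a (Ty.var a)) A)
  | σ, Ty.prod A B  => Ty.prod (substMap σ A) (substMap σ B)
  | σ, Ty.sum A B   => Ty.sum (substMap σ A) (substMap σ B)
  | σ, Ty.list A    => Ty.list (substMap σ A)

/-- `subst1 A b B` is `A[B/b]`. -/
def subst1 (A : Ty) (b : ℕ) (B : Ty) : Ty :=
  substMap (Function.update Ty.var b B) A

def lookupTy : List (ℕ × Ty) → ℕ → Option Ty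
  | [], _ => none
  | (a, B) :: rest, b => if a = b then some B else lookupTy rest b

/-- Simultaneous substitution `A[Bs/as]`. -/
def msubst (A : Ty) (as : List ℕ) (Bs : List Ty) : Ty :=
  substMap (fun b => (lookupTy (as.zip Bs) b).getD (Ty.var b)) A

/-- `∀ a1. … ∀ an. A`. -/
def Ty.alls : List ℕ → Ty → Ty
  | [], A => A
  | a :: as, A => Ty.all a (Ty.alls as A)

/-! ## Polarity -/

mutual
/-- Every occurrence of `b` in the type is positive. -/
def posOnly (b : ℕ) : Ty → Prop
  | Ty.var _     => True
  | Ty.base _    => True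
  | Ty.fn A _ B  => negOnly b A ∧ posOnly b B
  | Ty.all a A   => a = b ∨ posOnly b A
  | Ty.prod A B  => posOnly b A ∧ posOnly b B
  | Ty.sum A B   => posOnly b A ∧ posOnly b B
  | Ty.list A    => posOnly b A

/-- Every occurrence of `b` in the type is negative. -/
def negOnly (b : ℕ) : Ty → Prop
  | Ty.var a     => a ≠ b
  | Ty.base _    => True
  | Ty.fn A _ B  => posOnly b A ∧ negOnly b B
  | Ty.all a A   => a = b ∨ negOnly b A
  | Ty.prod A B  => negOnly b A ∧ negOnly b B
  | Ty.sum A B   => negOnly b A ∧ negOnly b B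
  | Ty.list A    => negOnly b A
end

/-- Every occurrence of `b` in the type is negative or strictly positive. -/
def negOrSPos (b : ℕ) : Ty → Prop
  | Ty.var _     => True
  | Ty.base _    => True
  | Ty.fn A _ B  => posOnly b A ∧ negOrSPos b B
  | Ty.all a A   => a = b ∨ negOrSPos b A
  | Ty.prod A B  => negOrSPos b A ∧ negOrSPos b B
  | Ty.sum A B   => negOrSPos b A ∧ negOrSPos b B
  | Ty.list A    => negOrSPos b A

/-- `SPosOcc A T` : the type `T` occurs at a strictly positive position in `A`. -/
inductive SPosOcc : Ty → Ty → Prop where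
  | refl {A} : SPosOcc A A
  | fn {A ε B T} : SPosOcc B T → SPosOcc (Ty.fn A ε B) T
  | all {a A T} : SPosOcc A T → SPosOcc (Ty.all a A) T
  | prodL {A B T} : SPosOcc A T → SPosOcc (Ty.prod A B) T
  | prodR {A B T} : SPosOcc B T → SPosOcc (Ty.prod A B) T
  | sumL {A B T} : SPosOcc A T → SPosOcc (Ty.sum A B) T
  | sumR {A B T} : SPosOcc B T → SPosOcc (Ty.sum A B) T
  | list {A T} : SPosOcc A T → SPosOcc (Ty.list A) T

/-! ## Operation signatures and the signature restriction -/

/-- `ty(op) = ∀ tvars. dom ↪ cod`, a closed type signature. -/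
structure OpSig : Type where
  tvars : List ℕ
  nodup : tvars.Nodup
  dom : Ty
  cod : Ty
  closed_dom : ftv dom ⊆ tvars.toFinset
  closed_cod : ftv cod ⊆ tvars.toFinset

/-- `SR ε` : every operation in `ε` satisfies the signature restriction
(relative to the global assignment `opty` of signatures). -/
inductive SR (opty : ℕ → OpSig) : Effect → Prop where
  | intro {ε : Effect}
      (h1 : ∀ o ∈ ε, ∀ a ∈ (opty o).tvars, negOrSPos a (opty o).dom)
      (h2 : ∀ o ∈ ε, ∀ a ∈ (opty o).tvars, posOnly a (opty o).cod)
      (h3 : ∀ o ∈ ε, ∀ C ε' D, SPosOcc (opty o).dom (Ty.fn C ε' D) →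
          (∃ a ∈ (opty o).tvars, a ∈ ftv D) → SR opty ε') :
      SR opty ε

/-! ## Typing contexts -/

inductive Binding : Type where
  | tmVar : ℕ → Ty → Binding
  | tyVar : ℕ → Binding

/-- Typing contexts; the most recently added binding is at the head. -/
abbrev Ctx := List Binding

def tmDom : Ctx → Finset ℕ
  | [] => ∅
  | Binding.tmVar x _ :: Γ => insert x (tmDom Γ)
  | Binding.tyVar _ :: Γ => tmDom Γ

def tyDom : Ctx → Finset ℕ
  | [] => ∅
  | Binding.tmVar _ _ :: Γ => tyDom Γ
  | Binding.tyVar a :: Γ => insert a (tyDom Γ)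

inductive WfCtx : Ctx → Prop where
  | nil : WfCtx []
  | tm {Γ : Ctx} {x : ℕ} {A : Ty} :
      WfCtx Γ → x ∉ tmDom Γ → ftv A ⊆ tyDom Γ → WfCtx (Binding.tmVar x A :: Γ)
  | ty {Γ : Ctx} {a : ℕ} :
      WfCtx Γ → a ∉ tyDom Γ → WfCtx (Binding.tyVar a :: Γ)

def extendTys (Γ : Ctx) (as : List ℕ) : Ctx := (as.map Binding.tyVar).reverse ++ Γ

def TyVarOnly (Γ : Ctx) : Prop := ∀ b ∈ Γ, ∃ a, b = Binding.tyVar a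

/-! ## Type containment for the effect system -/

inductive TySub (opty : ℕ → OpSig) : Ctx → Ty → Ty → Prop where
  | refl {Γ A} : WfCtx Γ → ftv A ⊆ tyDom Γ → TySub opty Γ A A
  | trans {Γ A B C} : TySub opty Γ A B → TySub opty Γ B C → TySub opty Γ A C
  | inst {Γ a A B} : WfCtx Γ → ftv B ⊆ tyDom Γ →
      TySub opty Γ (Ty.all a A) (subst1 A a B)
  | gen {Γ a A} : a ∉ ftv A → TySub opty Γ A (Ty.all a A)
  | poly {Γ a A B} : TySub opty (Binding.tyVar a :: Γ) A B →
      TySub opty Γ (Ty.all a A) (Ty.all a B)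
  | fnEff {Γ A1 A2 B1 B2 ε} : TySub opty Γ B1 A1 → TySub opty Γ A2 B2 →
      TySub opty Γ (Ty.fn A1 ε A2) (Ty.fn B1 ε B2)
  | prod {Γ A1 A2 B1 B2} : TySub opty Γ A1 B1 → TySub opty Γ A2 B2 →
      TySub opty Γ (Ty.prod A1 A2) (Ty.prod B1 B2)
  | sum {Γ A1 A2 B1 B2} : TySub opty Γ A1 B1 → TySub opty Γ A2 B2 →
      TySub opty Γ (Ty.sum A1 A2) (Ty.sum B1 B2)
  | list {Γ A B} : TySub opty Γ A B → TySub opty Γ (Ty.list A) (Ty.list B)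
  | dfunEff {Γ a A B ε} : a ∉ ftv A → SR opty ε →
      TySub opty Γ (Ty.all a (Ty.fn A ε B)) (Ty.fn A ε (Ty.all a B))
  | dprod {Γ a A B} :
      TySub opty Γ (Ty.all a (Ty.prod A B)) (Ty.prod (Ty.all a A) (Ty.all a B))
  | dsum {Γ a A B} :
      TySub opty Γ (Ty.all a (Ty.sum A B)) (Ty.sum (Ty.all a A) (Ty.all a B))
  | dlist {Γ a A} :
      TySub opty Γ (Ty.all a (Ty.list A)) (Ty.list (Ty.all a A))

/-! ## Terms and handlers (identical to the base calculus) -/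

mutual
inductive Term : Type where
  | var : ℕ → Term
  | const : ℕ → Term
  | lam : ℕ → Term → Term
  | app : Term → Term → Term
  | op : ℕ → Term → Term
  | handle : Term → Handler → Term
  | pair : Term → Term → Term
  | proj1 : Term → Term
  | proj2 : Term → Term
  | inl : Term → Term
  | inr : Term → Term
  | scase : Term → ℕ → Term → ℕ → Term → Term
  | nil : Term
  | cons : Term → Term
  | lcase : Term → Term → ℕ → Term → Term
  | fix : ℕ → ℕ → Term → Term

inductive Handler : Type where
  | ret : ℕ → Term → Handler
  | opClause : Handler → ℕ → ℕ → ℕ → Term → Handler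
end

def Handler.retClause : Handler → ℕ × Term
  | Handler.ret x M => (x, M)
  | Handler.opClause H _ _ _ _ => H.retClause

def Handler.lookup : Handler → ℕ → Option (ℕ × ℕ × Term)
  | Handler.ret _ _, _ => none
  | Handler.opClause H o' x k M, o => if o' = o then some (x, k, M) else H.lookup o

mutual
def Term.subst : Term → ℕ → Term → Term
  | Term.var y, x, N => if y = x then N else Term.var y
  | Term.const c, _, _ => Term.const c
  | Term.lam y M, x, N => if y = x then Term.lam y M else Term.lam y (M.subst x N)
  | Term.app M1 M2, x, N => Term.app (M1.subst x N) (M2.subst x N)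
  | Term.op o M, x, N => Term.op o (M.subst x N)
  | Term.handle M H, x, N => Term.handle (M.subst x N) (H.subst x N)
  | Term.pair M1 M2, x, N => Term.pair (M1.subst x N) (M2.subst x N)
  | Term.proj1 M, x, N => Term.proj1 (M.subst x N)
  | Term.proj2 M, x, N => Term.proj2 (M.subst x N)
  | Term.inl M, x, N => Term.inl (M.subst x N)
  | Term.inr M, x, N => Term.inr (M.subst x N)
  | Term.scase M y M1 z M2, x, N =>
      Term.scase (M.subst x N) y (if y = x then M1 else M1.subst x N)
        z (if z = x then M2 else M2.subst x N)
  | Term.nil, _, _ => Term.nil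
  | Term.cons M, x, N => Term.cons (M.subst x N)
  | Term.lcase M M1 y M2, x, N =>
      Term.lcase (M.subst x N) (M1.subst x N) y (if y = x then M2 else M2.subst x N)
  | Term.fix f y M, x, N =>
      if f = x ∨ y = x then Term.fix f y M else Term.fix f y (M.subst x N)

def Handler.subst : Handler → ℕ → Term → Handler
  | Handler.ret y M, x, N => Handler.ret y (if y = x then M else M.subst x N)
  | Handler.opClause H o y k M, x, N =>
      Handler.opClause (H.subst x N) o y k (if y = x ∨ k = x then M else M.subst x N)
end

inductive IsValue : Term → Prop where
  | const {c} : IsValue (Term.const c)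
  | lam {x M} : IsValue (Term.lam x M)
  | pair {v1 v2} : IsValue v1 → IsValue v2 → IsValue (Term.pair v1 v2)
  | inl {v} : IsValue v → IsValue (Term.inl v)
  | inr {v} : IsValue v → IsValue (Term.inr v)
  | nil : IsValue Term.nil
  | cons {v} : IsValue v → IsValue (Term.cons v)

mutual
def fvTerm : Term → Finset ℕ
  | Term.var x => {x}
  | Term.const _ => ∅
  | Term.lam x M => fvTerm M \ {x}
  | Term.app M1 M2 => fvTerm M1 ∪ fvTerm M2
  | Term.op _ M => fvTerm M
  | Term.handle M H => fvTerm M ∪ fvHandler H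
  | Term.pair M1 M2 => fvTerm M1 ∪ fvTerm M2
  | Term.proj1 M => fvTerm M
  | Term.proj2 M => fvTerm M
  | Term.inl M => fvTerm M
  | Term.inr M => fvTerm M
  | Term.scase M y M1 z M2 => fvTerm M ∪ (fvTerm M1 \ {y}) ∪ (fvTerm M2 \ {z})
  | Term.nil => ∅
  | Term.cons M => fvTerm M
  | Term.lcase M M1 y M2 => fvTerm M ∪ fvTerm M1 ∪ (fvTerm M2 \ {y})
  | Term.fix f y M => fvTerm M \ {f, y}

def fvHandler : Handler → Finset ℕ
  | Handler.ret x M => fvTerm M \ {x}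
  | Handler.opClause H _ x k M => fvHandler H ∪ (fvTerm M \ {x, k})
end

/-! ## Evaluation contexts and semantics -/

inductive ECtx : Type where
  | hole : ECtx
  | appL : ECtx → Term → ECtx
  | appR : (v : Term) → IsValue v → ECtx → ECtx
  | op : ℕ → ECtx → ECtx
  | handle : ECtx → Handler → ECtx
  | pairL : ECtx → Term → ECtx
  | pairR : (v : Term) → IsValue v → ECtx → ECtx
  | proj1 : ECtx → ECtx
  | proj2 : ECtx → ECtx
  | inl : ECtx → ECtx
  | inr : ECtx → ECtx
  | scase : ECtx → ℕ → Term → ℕ → Term → ECtx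
  | cons : ECtx → ECtx
  | lcase : ECtx → Term → ℕ → Term → ECtx

def plug : ECtx → Term → Term
  | ECtx.hole, M => M
  | ECtx.appL E M2, M => Term.app (plug E M) M2
  | ECtx.appR v _ E, M => Term.app v (plug E M)
  | ECtx.op o E, M => Term.op o (plug E M)
  | ECtx.handle E H, M => Term.handle (plug E M) H
  | ECtx.pairL E M2, M => Term.pair (plug E M) M2
  | ECtx.pairR v _ E, M => Term.pair v (plug E M)
  | ECtx.proj1 E, M => Term.proj1 (plug E M)
  | ECtx.proj2 E, M => Term.proj2 (plug E M)
  | ECtx.inl E, M => Term.inl (plug E M)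
  | ECtx.inr E, M => Term.inr (plug E M)
  | ECtx.scase E y M1 z M2, M => Term.scase (plug E M) y M1 z M2
  | ECtx.cons E, M => Term.cons (plug E M)
  | ECtx.lcase E M1 y M2, M => Term.lcase (plug E M) M1 y M2

def opFree (o : ℕ) : ECtx → Prop
  | ECtx.hole => True
  | ECtx.appL E _ => opFree o E
  | ECtx.appR _ _ E => opFree o E
  | ECtx.op _ E => opFree o E
  | ECtx.handle E H => H.lookup o = none ∧ opFree o E
  | ECtx.pairL E _ => opFree o E
  | ECtx.pairR _ _ E => opFree o E
  | ECtx.proj1 E => opFree o E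
  | ECtx.proj2 E => opFree o E
  | ECtx.inl E => opFree o E
  | ECtx.inr E => opFree o E
  | ECtx.scase E _ _ _ _ => opFree o E
  | ECtx.cons E => opFree o E
  | ECtx.lcase E _ _ _ => opFree o E

def fvECtx : ECtx → Finset ℕ
  | ECtx.hole => ∅
  | ECtx.appL E M => fvECtx E ∪ fvTerm M
  | ECtx.appR v _ E => fvTerm v ∪ fvECtx E
  | ECtx.op _ E => fvECtx E
  | ECtx.handle E H => fvECtx E ∪ fvHandler H
  | ECtx.pairL E M => fvECtx E ∪ fvTerm M
  | ECtx.pairR v _ E => fvTerm v ∪ fvECtx E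
  | ECtx.proj1 E => fvECtx E
  | ECtx.proj2 E => fvECtx E
  | ECtx.inl E => fvECtx E
  | ECtx.inr E => fvECtx E
  | ECtx.scase E y M1 z M2 => fvECtx E ∪ (fvTerm M1 \ {y}) ∪ (fvTerm M2 \ {z})
  | ECtx.cons E => fvECtx E
  | ECtx.lcase E M1 y M2 => fvECtx E ∪ fvTerm M1 ∪ (fvTerm M2 \ {y})

inductive Reduce (zeta : ℕ → ℕ → Option ℕ) : Term → Term → Prop where
  | const {c1 c2 c} : zeta c1 c2 = some c →
      Reduce zeta (Term.app (Term.const c1) (Term.const c2)) (Term.const c)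
  | beta {x M v} : IsValue v →
      Reduce zeta (Term.app (Term.lam x M) v) (M.subst x v)
  | ret {v H x M} : IsValue v → H.retClause = (x, M) →
      Reduce zeta (Term.handle v H) (M.subst x v)
  | handle {E o v H x k M y} : IsValue v → opFree o E →
      H.lookup o = some (x, k, M) →
      y ∉ fvECtx E ∪ fvHandler H →
      Reduce zeta (Term.handle (plug E (Term.op o v)) H)
        ((M.subst x v).subst k (Term.lam y (Term.handle (plug E (Term.var y)) H)))
  | proj1 {v1 v2} : IsValue v1 → IsValue v2 →
      Reduce zeta (Term.proj1 (Term.pair v1 v2)) v1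
  | proj2 {v1 v2} : IsValue v1 → IsValue v2 →
      Reduce zeta (Term.proj2 (Term.pair v1 v2)) v2
  | caseL {v y M1 z M2} : IsValue v →
      Reduce zeta (Term.scase (Term.inl v) y M1 z M2) (M1.subst y v)
  | caseR {v y M1 z M2} : IsValue v →
      Reduce zeta (Term.scase (Term.inr v) y M1 z M2) (M2.subst z v)
  | lnil {M1 y M2} : Reduce zeta (Term.lcase Term.nil M1 y M2) M1
  | lcons {v M1 y M2} : IsValue v →
      Reduce zeta (Term.lcase (Term.cons v) M1 y M2) (M2.subst y v)
  | fix {f x M} :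
      Reduce zeta (Term.fix f x M) ((Term.lam x M).subst f (Term.fix f x M))

def Step (zeta : ℕ → ℕ → Option ℕ) (M1 M2 : Term) : Prop :=
  ∃ E M1' M2', M1 = plug E M1' ∧ M2 = plug E M2' ∧ Reduce zeta M1' M2'

def Steps (zeta : ℕ → ℕ → Option ℕ) : Term → Term → Prop :=
  Relation.ReflTransGen (Step zeta)

/-! ## Constants -/

/-- First-order (pure) types `ι1 → … → ιn → ι(n+1)`. -/
inductive FirstOrder : Ty → Prop where
  | base {i} : FirstOrder (Ty.base i)
  | fn {i A} : FirstOrder A → FirstOrder (Ty.fn (Ty.base i) ∅ A)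

structure ConstAssum (tyc : ℕ → Ty) (zeta : ℕ → ℕ → Option ℕ) : Prop where
  firstOrder : ∀ c, FirstOrder (tyc c)
  zeta_defined : ∀ c1 c2, (zeta c1 c2).isSome ↔
      ∃ i ε A, tyc c1 = Ty.fn (Ty.base i) ε A ∧ tyc c2 = Ty.base i
  zeta_ty : ∀ c1 c2 c i ε A, zeta c1 c2 = some c →
      tyc c1 = Ty.fn (Ty.base i) ε A → tyc c = A

/-! ## The type-and-effect system -/

mutual
inductive ETyping (opty : ℕ → OpSig) (tyc : ℕ → Ty) :
    Ctx → Term → Ty → Effect → Prop where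
  | var {Γ x A ε} : WfCtx Γ → Binding.tmVar x A ∈ Γ →
      ETyping opty tyc Γ (Term.var x) A ε
  | const {Γ c ε} : WfCtx Γ → ETyping opty tyc Γ (Term.const c) (tyc c) ε
  | abs {Γ x A M B ε' ε} : ETyping opty tyc (Binding.tmVar x A :: Γ) M B ε' →
      ETyping opty tyc Γ (Term.lam x M) (Ty.fn A ε' B) ε
  | app {Γ M1 M2 A B ε' ε} : ETyping opty tyc Γ M1 (Ty.fn A ε' B) ε →
      ETyping opty tyc Γ M2 A ε → ε' ⊆ ε →
      ETyping opty tyc Γ (Term.app M1 M2) B ε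
  | gen {Γ a M A ε} : ETyping opty tyc (Binding.tyVar a :: Γ) M A ε →
      SR opty ε → ETyping opty tyc Γ M (Ty.all a A) ε
  | inst {Γ M A B ε} : ETyping opty tyc Γ M A ε → TySub opty Γ A B →
      WfCtx Γ → ftv B ⊆ tyDom Γ → ETyping opty tyc Γ M B ε
  | op {Γ o M Cs ε} : WfCtx Γ → Cs.length = (opty o).tvars.length →
      (∀ C ∈ Cs, ftv C ⊆ tyDom Γ) → o ∈ ε →
      ETyping opty tyc Γ M (msubst (opty o).dom (opty o).tvars Cs) ε →
      ETyping opty tyc Γ (Term.op o M) (msubst (opty o).cod (opty o).tvars Cs) ε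
  | handle {Γ M H A B ε ε'} : ETyping opty tyc Γ M A ε →
      EHTyping opty tyc Γ H A ε B ε' →
      ETyping opty tyc Γ (Term.handle M H) B ε'
  | pair {Γ M1 M2 A B ε} : ETyping opty tyc Γ M1 A ε →
      ETyping opty tyc Γ M2 B ε →
      ETyping opty tyc Γ (Term.pair M1 M2) (Ty.prod A B) ε
  | proj1 {Γ M A B ε} : ETyping opty tyc Γ M (Ty.prod A B) ε →
      ETyping opty tyc Γ (Term.proj1 M) A ε
  | proj2 {Γ M A B ε} : ETyping opty tyc Γ M (Ty.prod A B) ε →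
      ETyping opty tyc Γ (Term.proj2 M) B ε
  | inl {Γ M A B ε} : ETyping opty tyc Γ M A ε → ftv B ⊆ tyDom Γ →
      ETyping opty tyc Γ (Term.inl M) (Ty.sum A B) ε
  | inr {Γ M A B ε} : ETyping opty tyc Γ M B ε → ftv A ⊆ tyDom Γ →
      ETyping opty tyc Γ (Term.inr M) (Ty.sum A B) ε
  | scase {Γ M x M1 y M2 A B C ε} : ETyping opty tyc Γ M (Ty.sum A B) ε →
      ETyping opty tyc (Binding.tmVar x A :: Γ) M1 C ε →
      ETyping opty tyc (Binding.tmVar y B :: Γ) M2 C ε →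
      ETyping opty tyc Γ (Term.scase M x M1 y M2) C ε
  | nil {Γ A ε} : WfCtx Γ → ftv A ⊆ tyDom Γ →
      ETyping opty tyc Γ Term.nil (Ty.list A) ε
  | cons {Γ M A ε} : ETyping opty tyc Γ M (Ty.prod A (Ty.list A)) ε →
      ETyping opty tyc Γ (Term.cons M) (Ty.list A) ε
  | lcase {Γ M M1 x M2 A B ε} : ETyping opty tyc Γ M (Ty.list A) ε →
      ETyping opty tyc Γ M1 B ε →
      ETyping opty tyc (Binding.tmVar x (Ty.prod A (Ty.list A)) :: Γ) M2 B ε →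
      ETyping opty tyc Γ (Term.lcase M M1 x M2) B ε
  | fix {Γ f x M A B ε' ε} :
      ETyping opty tyc
        (Binding.tmVar x A :: Binding.tmVar f (Ty.fn A ε' B) :: Γ) M B ε' →
      ETyping opty tyc Γ (Term.fix f x M) (Ty.fn A ε' B) ε
  | weak {Γ M A ε ε'} : ETyping opty tyc Γ M A ε → ε ⊆ ε' →
      ETyping opty tyc Γ M A ε'

inductive EHTyping (opty : ℕ → OpSig) (tyc : ℕ → Ty) :
    Ctx → Handler → Ty → Effect → Ty → Effect → Prop where
  | ret {Γ x M A B ε ε''} :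
      ETyping opty tyc (Binding.tmVar x A :: Γ) M B ε'' →
      EHTyping opty tyc Γ (Handler.ret x M) A ε B (ε ∪ ε'')
  | op {Γ H o x k M A B ε ε'} : EHTyping opty tyc Γ H A ε B ε' → o ∉ ε →
      ETyping opty tyc
        (Binding.tmVar k (Ty.fn (opty o).cod ε' B) ::
          Binding.tmVar x (opty o).dom :: extendTys Γ (opty o).tvars) M B ε' →
      EHTyping opty tyc Γ (Handler.opClause H o x k M) A (insert o ε) B ε'
end

/-! ## Auxiliary machinery for progress -/

section ProgressAux

variable {opty : ℕ → OpSig} {tyc : ℕ → Ty} {zeta : ℕ → ℕ → Option ℕ}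

/-- Head constructors of types. -/
inductive Head : Type where
  | base : ℕ → Head
  | fn | prod | sum | list
deriving DecidableEq

/-- Head kinds: a constructor head, a bound-variable head, or a free-variable head. -/
inductive HKind : Type where
  | con : Head → HKind
  | bvar : HKind
  | fvar : ℕ → HKind
deriving DecidableEq

def hdAux : HKind → ℕ → HKind
  | .fvar b, a => if b = a then .bvar else .fvar b
  | k, _ => k

@[simp] lemma hdAux_con {h a} : hdAux (.con h) a = .con h := rfl
@[simp] lemma hdAux_bvar {a} : hdAux .bvar a = .bvar := rfl
@[simp] lemma hdAux_fvar {b a} : hdAux (.fvar b) a = if b = a then .bvar else .fvar b := rfl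

def hd : Ty → HKind
  | Ty.var a => .fvar a
  | Ty.base i => .con (.base i)
  | Ty.fn _ _ _ => .con .fn
  | Ty.all a A => hdAux (hd A) a
  | Ty.prod _ _ => .con .prod
  | Ty.sum _ _ => .con .sum
  | Ty.list _ => .con .list

@[simp] lemma hd_var {a} : hd (Ty.var a) = .fvar a := rfl
@[simp] lemma hd_base {i} : hd (Ty.base i) = .con (.base i) := rfl
@[simp] lemma hd_fn {A ε B} : hd (Ty.fn A ε B) = .con .fn := rfl
@[simp] lemma hd_all {a A} : hd (Ty.all a A) = hdAux (hd A) a := rfl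
@[simp] lemma hd_prod {A B} : hd (Ty.prod A B) = .con .prod := rfl
@[simp] lemma hd_sum {A B} : hd (Ty.sum A B) = .con .sum := rfl
@[simp] lemma hd_list {A} : hd (Ty.list A) = .con .list := rfl

lemma hdAux_eq_con {k a h} (hk : hdAux k a = .con h) : k = .con h := by
  cases k with
  | con h' => exact hk
  | bvar => simp at hk
  | fvar b => simp only [hdAux_fvar] at hk; split_ifs at hk <;> simp at hk

lemma hdAux_eq_fvar {k a b} (hk : hdAux k a = .fvar b) : k = .fvar b ∧ b ≠ a := by
  cases k with
  | con h' => simp at hk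
  | bvar => simp at hk
  | fvar b' =>
      simp only [hdAux_fvar] at hk
      split_ifs at hk with h
      injection hk with hk
      subst hk
      exact ⟨rfl, h⟩

lemma hd_con_subst {A h} (σ : ℕ → Ty) (hA : hd A = .con h) :
    hd (substMap σ A) = .con h := by
  induction A generalizing σ with
  | var a => simp at hA
  | base i => simpa [substMap] using hA
  | fn A ε B ihA ihB => simpa [substMap] using hA
  | all a A ih =>
      simp only [substMap, hd_all]
      rw [ih _ (hdAux_eq_con hA), hdAux_con]
  | prod A B ihA ihB => simpa [substMap] using hA
  | sum A B ihA ihB => simpa [substMap] using hA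
  | list A ih => simpa [substMap] using hA

lemma hd_fvar_subst {A b} (hA : hd A = .fvar b) :
    ∀ σ : ℕ → Ty, σ b = Ty.var b → hd (substMap σ A) = .fvar b := by
  induction A with
  | var a =>
      intro σ hσ
      simp only [hd_var, HKind.fvar.injEq] at hA
      subst hA
      simp [substMap, hσ]
  | base i => simp at hA
  | fn A ε B ihA ihB => simp at hA
  | all a A ih =>
      intro σ hσ
      obtain ⟨hk, hne⟩ := hdAux_eq_fvar hA
      simp only [substMap, hd_all]
      rw [ih hk _ (by rw [Function.update_of_ne hne]; exact hσ), hdAux_fvar, if_neg hne]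
  | prod A B ihA ihB => simp at hA
  | sum A B ihA ihB => simp at hA
  | list A ih => simp at hA

lemma hd_bvar_subst {A} (hA : hd A = .bvar) :
    ∀ σ : ℕ → Ty, hd (substMap σ A) = .bvar := by
  induction A with
  | var a => simp at hA
  | base i => simp at hA
  | fn A ε B ihA ihB => simp at hA
  | all a A ih =>
      intro σ
      simp only [hd_all] at hA
      simp only [substMap, hd_all]
      cases hk : hd A with
      | con h => rw [hk, hdAux_con] at hA; simp at hA
      | bvar => rw [ih hk, hdAux_bvar]
      | fvar b =>
          rw [hk, hdAux_fvar] at hA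
          split_ifs at hA with hba
          subst hba
          rw [hd_fvar_subst hk _ (by rw [Function.update_self]), hdAux_fvar, if_pos rfl]
  | prod A B ihA ihB => simp at hA
  | sum A B ihA ihB => simp at hA
  | list A ih => simp at hA

lemma hd_fvar_ftv {A b} (hA : hd A = .fvar b) : b ∈ ftv A := by
  induction A with
  | var a => simp only [hd_var, HKind.fvar.injEq] at hA; subst hA; simp [ftv]
  | base i => simp at hA
  | fn A ε B ihA ihB => simp at hA
  | all a A ih =>
      obtain ⟨hk, hne⟩ := hdAux_eq_fvar hA
      simp only [ftv, Finset.mem_sdiff, Finset.mem_singleton]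
      exact ⟨ih hk, hne⟩
  | prod A B ihA ihB => simp at hA
  | sum A B ihA ihB => simp at hA
  | list A ih => simp at hA

lemma TySub_hd_con {Γ A B h} (hs : TySub opty Γ A B) :
    hd A = .con h → hd B = .con h := by
  induction hs with
  | refl _ _ => exact id
  | trans _ _ ih1 ih2 => exact fun hA => ih2 (ih1 hA)
  | inst _ _ => exact fun hA => hd_con_subst _ (hdAux_eq_con hA)
  | gen _ => intro hA; rw [hd_all, hA, hdAux_con]
  | poly _ ih => intro hA; rw [hd_all, ih (hdAux_eq_con hA), hdAux_con]
  | fnEff _ _ _ _ => intro hA; simpa using hA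
  | prod _ _ _ _ => intro hA; simpa using hA
  | sum _ _ _ _ => intro hA; simpa using hA
  | list _ _ => intro hA; simpa using hA
  | dfunEff _ _ => intro hA; simpa using hA
  | dprod => intro hA; simpa using hA
  | dsum => intro hA; simpa using hA
  | dlist => intro hA; simpa using hA

lemma TySub_hd_fvar {Γ A B} (hs : TySub opty Γ A B) :
    ∀ b, hd A = .fvar b → hd B = .fvar b := by
  induction hs with
  | refl _ _ => exact fun _ => id
  | trans _ _ ih1 ih2 => exact fun b hA => ih2 b (ih1 b hA)
  | @inst Γ a A B _ _ =>
      intro b hA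
      obtain ⟨hk, hne⟩ := hdAux_eq_fvar hA
      exact hd_fvar_subst hk _ (Function.update_of_ne hne _ _)
  | @gen Γ a A hfa =>
      intro b hA
      have hba : b ≠ a := fun h => hfa (h ▸ hd_fvar_ftv hA)
      rw [hd_all, hA, hdAux_fvar, if_neg hba]
  | poly _ ih =>
      intro b hA
      obtain ⟨hk, hne⟩ := hdAux_eq_fvar hA
      rw [hd_all, ih b hk, hdAux_fvar, if_neg hne]
  | fnEff _ _ _ _ => intro b hA; simp at hA
  | prod _ _ _ _ => intro b hA; simp at hA
  | sum _ _ _ _ => intro b hA; simp at hA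
  | list _ _ => intro b hA; simp at hA
  | dfunEff _ _ => intro b hA; simp at hA
  | dprod => intro b hA; simp at hA
  | dsum => intro b hA; simp at hA
  | dlist => intro b hA; simp at hA

/-- "Base-i-like" domains: the head is `base i` or a bound variable. -/
def BL (i : ℕ) (D : Ty) : Prop := hd D = .con (.base i) ∨ hd D = .bvar

lemma BL_subst {i D} (σ : ℕ → Ty) (h : BL i D) : BL i (substMap σ D) :=
  h.imp (fun h' => hd_con_subst σ h') (fun h' => hd_bvar_subst h' σ)

lemma BL_sub {Γ B A i} (hs : TySub opty Γ B A) (h : BL i A) : BL i B := by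
  cases hk : hd B with
  | con hh =>
      left
      have h2 := TySub_hd_con hs hk
      rcases h with h | h
      · rw [h2] at h; cases h; exact hk
      · rw [h2] at h; simp at h
  | bvar => right; exact hk
  | fvar b =>
      exfalso
      have h2 := TySub_hd_fvar hs b hk
      rcases h with h | h <;> rw [h2] at h <;> simp at h

/-- Invariant for the types assignable to a constant whose signature is
`fn (base i) ∅ T'`. -/
inductive CCfn (i : ℕ) : Ty → Prop where
  | fn {A1 ε B} : BL i A1 → CCfn i (Ty.fn A1 ε B)
  | all {a A} : CCfn i A → CCfn i (Ty.all a A)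

lemma CCfn_subst {i A} (h : CCfn i A) : ∀ σ : ℕ → Ty, CCfn i (substMap σ A) := by
  induction h with
  | fn hbl => intro σ; exact CCfn.fn (BL_subst σ hbl)
  | all _ ih => intro σ; exact CCfn.all (ih _)

lemma CCfn_sub {Γ A B i} (hs : TySub opty Γ A B) : CCfn i A → CCfn i B := by
  induction hs with
  | refl _ _ => exact id
  | trans _ _ ih1 ih2 => exact fun h => ih2 (ih1 h)
  | inst _ _ => intro h; cases h with | all h' => exact CCfn_subst h' _
  | gen _ => exact fun h => CCfn.all h
  | poly _ ih => intro h; cases h with | all h' => exact CCfn.all (ih h')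
  | fnEff hs1 _ _ _ => intro h; cases h with | fn hbl => exact CCfn.fn (BL_sub hs1 hbl)
  | prod _ _ _ _ => intro h; cases h
  | sum _ _ _ _ => intro h; cases h
  | list _ _ => intro h; cases h
  | dfunEff _ _ =>
      intro h; cases h with | all h' => cases h' with | fn hbl => exact CCfn.fn hbl
  | dprod => intro h; cases h with | all h' => cases h'
  | dsum => intro h; cases h with | all h' => cases h'
  | dlist => intro h; cases h with | all h' => cases h'

/-- What we know about the type of a value, per value shape. -/
def VT (tyc : ℕ → Ty) : Term → Ty → Prop
  | Term.const c, A =>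
      hd A = hd (tyc c) ∧
        ∀ i ε' T', tyc c = Ty.fn (Ty.base i) ε' T' → CCfn i A
  | Term.lam _ _, A => hd A = .con .fn
  | Term.pair _ _, A => hd A = .con .prod
  | Term.inl _, A => hd A = .con .sum
  | Term.inr _, A => hd A = .con .sum
  | Term.nil, A => hd A = .con .list
  | Term.cons _, A => hd A = .con .list
  | _, _ => True

lemma FirstOrder.hd_con {T} (h : FirstOrder T) : ∃ hh, hd T = .con hh := by
  cases h <;> exact ⟨_, rfl⟩

lemma FirstOrder.fn_of_hd {T} (hfo : FirstOrder T) (h : hd T = .con .fn) :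
    ∃ i T', T = Ty.fn (Ty.base i) ∅ T' := by
  cases hfo with
  | base => simp at h
  | fn h' => exact ⟨_, _, rfl⟩

lemma FirstOrder.base_of_hd {T i} (hfo : FirstOrder T) (h : hd T = .con (.base i)) :
    T = Ty.base i := by
  cases hfo with
  | base => simp only [hd_base, HKind.con.injEq, Head.base.injEq] at h; rw [h]
  | fn _ => simp at h

lemma FirstOrder.not_hd {T} (h : FirstOrder T) :
    hd T ≠ .con .prod ∧ hd T ≠ .con .sum ∧ hd T ≠ .con .list := by
  cases h <;> simp

lemma hd_all_con {a A h} (hA : hd A = .con h) : hd (Ty.all a A) = .con h := by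
  rw [hd_all, hA, hdAux_con]

/-- Canonical forms: what a value's type can look like. -/
lemma canon (hconst : ConstAssum tyc zeta) {Γ M A ε}
    (ht : ETyping opty tyc Γ M A ε) : IsValue M → VT tyc M A := by
  induction ht using ETyping.rec (motive_2 := fun _ _ _ _ _ _ _ => True)
  case var => intro hv; cases hv
  case const c _ _ =>
      intro _
      exact ⟨rfl, fun i e T he => by rw [he]; exact CCfn.fn (Or.inl rfl)⟩
  case abs => exact fun _ => rfl
  case app => intro hv; cases hv
  case gen Γ a M A ε hM hsr ih =>
      intro hv
      have h := ih hv
      cases hv with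
      | @const c =>
          obtain ⟨hh, hc⟩ := FirstOrder.hd_con (hconst.firstOrder c)
          exact ⟨(hd_all_con (h.1.trans hc)).trans hc.symm,
            fun i e T he => CCfn.all (h.2 i e T he)⟩
      | lam => exact hd_all_con h
      | pair _ _ => exact hd_all_con h
      | inl _ => exact hd_all_con h
      | inr _ => exact hd_all_con h
      | nil => exact hd_all_con h
      | cons _ => exact hd_all_con h
  case inst Γ M A B ε hM hs hwf hftv ih =>
      intro hv
      have h := ih hv
      cases hv with
      | @const c =>
          obtain ⟨hh, hc⟩ := FirstOrder.hd_con (hconst.firstOrder c)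
          exact ⟨(TySub_hd_con hs (h.1.trans hc)).trans hc.symm,
            fun i e T he => CCfn_sub hs (h.2 i e T he)⟩
      | lam => exact TySub_hd_con hs h
      | pair _ _ => exact TySub_hd_con hs h
      | inl _ => exact TySub_hd_con hs h
      | inr _ => exact TySub_hd_con hs h
      | nil => exact TySub_hd_con hs h
      | cons _ => exact TySub_hd_con hs h
  case op => intro hv; cases hv
  case handle => intro hv; cases hv
  case pair => exact fun _ => rfl
  case proj1 => intro hv; cases hv
  case proj2 => intro hv; cases hv
  case inl => exact fun _ => rfl
  case inr => exact fun _ => rfl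
  case scase => intro hv; cases hv
  case nil => exact fun _ => rfl
  case cons => exact fun _ => rfl
  case lcase => intro hv; cases hv
  case fix => intro hv; cases hv
  case weak ih => exact ih
  all_goals intros; trivial

lemma canon_prod (hconst : ConstAssum tyc zeta) {Γ v A B ε}
    (ht : ETyping opty tyc Γ v (Ty.prod A B) ε) (hv : IsValue v) :
    ∃ v1 v2, v = Term.pair v1 v2 ∧ IsValue v1 ∧ IsValue v2 := by
  have hV := canon hconst ht hv
  cases hv with
  | pair h1 h2 => exact ⟨_, _, rfl, h1, h2⟩
  | @const c =>
      exfalso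
      have h1 : hd (tyc c) = .con .prod := hV.1.symm
      exact (hconst.firstOrder c).not_hd.1 h1
  | lam => simp [VT] at hV
  | inl _ => simp [VT] at hV
  | inr _ => simp [VT] at hV
  | nil => simp [VT] at hV
  | cons _ => simp [VT] at hV

lemma canon_sum (hconst : ConstAssum tyc zeta) {Γ v A B ε}
    (ht : ETyping opty tyc Γ v (Ty.sum A B) ε) (hv : IsValue v) :
    (∃ v', v = Term.inl v' ∧ IsValue v') ∨ (∃ v', v = Term.inr v' ∧ IsValue v') := by
  have hV := canon hconst ht hv
  cases hv with
  | inl h1 => exact Or.inl ⟨_, rfl, h1⟩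
  | inr h1 => exact Or.inr ⟨_, rfl, h1⟩
  | @const c =>
      exfalso
      exact (hconst.firstOrder c).not_hd.2.1 hV.1.symm
  | lam => simp [VT] at hV
  | pair _ _ => simp [VT] at hV
  | nil => simp [VT] at hV
  | cons _ => simp [VT] at hV

lemma canon_list (hconst : ConstAssum tyc zeta) {Γ v A ε}
    (ht : ETyping opty tyc Γ v (Ty.list A) ε) (hv : IsValue v) :
    v = Term.nil ∨ ∃ v', v = Term.cons v' ∧ IsValue v' := by
  have hV := canon hconst ht hv
  cases hv with
  | nil => exact Or.inl rfl
  | cons h1 => exact Or.inr ⟨_, rfl, h1⟩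
  | @const c =>
      exfalso
      exact (hconst.firstOrder c).not_hd.2.2 hV.1.symm
  | lam => simp [VT] at hV
  | pair _ _ => simp [VT] at hV
  | inl _ => simp [VT] at hV
  | inr _ => simp [VT] at hV

/-- The statement of progress for a term with effect `ε`. -/
abbrev Prog (zeta : ℕ → ℕ → Option ℕ) (ε : Effect) (M : Term) : Prop :=
  (∃ M', Step zeta M M') ∨ IsValue M ∨
    ∃ E o v, IsValue v ∧ opFree o E ∧ o ∈ ε ∧ M = plug E (Term.op o v)

lemma liftRes (zeta : ℕ → ℕ → Option ℕ) (ε : Effect) {M : Term}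
    (g : Term → Term) (f : ECtx → ECtx)
    (hplug : ∀ E N, plug (f E) N = g (plug E N))
    (hfree : ∀ o E, opFree o E → opFree o (f E))
    (h : Prog zeta ε M) :
    IsValue M ∨ Prog zeta ε (g M) := by
  rcases h with ⟨M', hs⟩ | hv | ⟨E, o, v, hv, hf, ho, heq⟩
  · obtain ⟨E, N, N', h1, h2, hr⟩ := hs
    subst h1; subst h2
    exact Or.inr (Or.inl ⟨_, f E, N, N', (hplug E N).symm, (hplug E N').symm, hr⟩)
  · exact Or.inl hv
  · refine Or.inr (Or.inr (Or.inr ⟨f E, o, v, hv, hfree o E hf, ho, ?_⟩))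
    rw [heq, hplug]

lemma TyVarOnly.cons {Γ : Ctx} (h : TyVarOnly Γ) (a : ℕ) :
    TyVarOnly (Binding.tyVar a :: Γ) := by
  intro b hb
  rcases List.mem_cons.mp hb with rfl | hb
  · exact ⟨a, rfl⟩
  · exact h b hb

theorem progress_aux (hconst : ConstAssum tyc zeta) {Γ M A ε}
    (ht : ETyping opty tyc Γ M A ε) : TyVarOnly Γ → Prog zeta ε M := by
  induction ht using ETyping.rec
    (motive_2 := fun Γ H A ε B ε' _ =>
      ∀ o, o ∈ ε → Handler.lookup H o = none → o ∈ ε')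
  case var Γ x A ε hwf hmem =>
      intro hΔ
      exfalso
      obtain ⟨a, ha⟩ := hΔ _ hmem
      cases ha
  case const => exact fun _ => Or.inr (Or.inl IsValue.const)
  case abs => exact fun _ => Or.inr (Or.inl IsValue.lam)
  case app Γ M1 M2 A B ε' ε h1 h2 hsub ih1 ih2 =>
      intro hΔ
      rcases liftRes zeta ε (fun t => Term.app t M2) (fun E => ECtx.appL E M2)
        (fun _ _ => rfl) (fun _ _ h => h) (ih1 hΔ) with hv1 | hp
      · rcases liftRes zeta ε (fun t => Term.app M1 t) (fun E => ECtx.appR M1 hv1 E)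
          (fun _ _ => rfl) (fun _ _ h => h) (ih2 hΔ) with hv2 | hp
        · cases hv1 with
          | lam => exact Or.inl ⟨_, ECtx.hole, _, _, rfl, rfl, Reduce.beta hv2⟩
          | @const c =>
              have hV1 := canon hconst h1 IsValue.const
              have hhd : hd (tyc c) = .con .fn := hV1.1.symm
              obtain ⟨i, T', hty⟩ := (hconst.firstOrder c).fn_of_hd hhd
              have hcc := hV1.2 i ∅ T' hty
              cases hcc with
              | fn hbl =>
                cases hv2 with
                | @const c2 =>
                    have hV2 := canon hconst h2 IsValue.const
                    have hb2 : hd (tyc c2) = .con (.base i) := by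
                      rcases hbl with hb | hb
                      · exact hV2.1.symm.trans hb
                      · obtain ⟨hh, hc⟩ := FirstOrder.hd_con (hconst.firstOrder c2)
                        rw [hV2.1, hc] at hb; simp at hb
                    have hc2 : tyc c2 = Ty.base i :=
                      (hconst.firstOrder c2).base_of_hd hb2
                    have hz : (zeta c c2).isSome :=
                      (hconst.zeta_defined c c2).2 ⟨i, ∅, T', hty, hc2⟩
                    obtain ⟨c3, hc3⟩ := Option.isSome_iff_exists.mp hz
                    exact Or.inl ⟨_, ECtx.hole, _, _, rfl, rfl, Reduce.const hc3⟩
                | lam =>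
                    exfalso
                    have hV2 := canon hconst h2 IsValue.lam
                    rcases hbl with hb | hb <;> rw [hV2] at hb <;> simp at hb
                | pair hx hy =>
                    exfalso
                    have hV2 := canon hconst h2 (IsValue.pair hx hy)
                    rcases hbl with hb | hb <;> rw [hV2] at hb <;> simp at hb
                | inl hx =>
                    exfalso
                    have hV2 := canon hconst h2 (IsValue.inl hx)
                    rcases hbl with hb | hb <;> rw [hV2] at hb <;> simp at hb
                | inr hx =>
                    exfalso
                    have hV2 := canon hconst h2 (IsValue.inr hx)
                    rcases hbl with hb | hb <;> rw [hV2] at hb <;> simp at hb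
                | nil =>
                    exfalso
                    have hV2 := canon hconst h2 IsValue.nil
                    rcases hbl with hb | hb <;> rw [hV2] at hb <;> simp at hb
                | cons hx =>
                    exfalso
                    have hV2 := canon hconst h2 (IsValue.cons hx)
                    rcases hbl with hb | hb <;> rw [hV2] at hb <;> simp at hb
          | pair hx hy =>
              exfalso
              have hV1 := canon hconst h1 (IsValue.pair hx hy)
              simp [VT] at hV1
          | inl hx =>
              exfalso
              have hV1 := canon hconst h1 (IsValue.inl hx)
              simp [VT] at hV1
          | inr hx =>
              exfalso
              have hV1 := canon hconst h1 (IsValue.inr hx)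
              simp [VT] at hV1
          | nil =>
              exfalso
              have hV1 := canon hconst h1 IsValue.nil
              simp [VT] at hV1
          | cons hx =>
              exfalso
              have hV1 := canon hconst h1 (IsValue.cons hx)
              simp [VT] at hV1
        · exact hp
      · exact hp
  case gen Γ a M A ε hM hsr ih =>
      exact fun hΔ => ih (hΔ.cons a)
  case inst Γ M A B ε hM hs hwf hftv ih => exact ih
  case op Γ o M Cs ε hwf hlen hftv hin hM ih =>
      intro hΔ
      rcases liftRes zeta ε (Term.op o) (ECtx.op o)
        (fun _ _ => rfl) (fun _ _ h => h) (ih hΔ) with hv | hp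
      · exact Or.inr (Or.inr ⟨ECtx.hole, o, M, hv, trivial, hin, rfl⟩)
      · exact hp
  case handle Γ M H A B ε ε' hM hH ihM ihH =>
      intro hΔ
      rcases ihM hΔ with ⟨M', hs⟩ | hv | ⟨E, o, v, hv, hf, ho, heq⟩
      · obtain ⟨E, N, N', h1, h2, hr⟩ := hs
        subst h1; subst h2
        exact Or.inl ⟨_, ECtx.handle E H, N, N', rfl, rfl, hr⟩
      · rcases hrc : H.retClause with ⟨x, MR⟩
        exact Or.inl ⟨_, ECtx.hole, _, _, rfl, rfl, Reduce.ret hv hrc⟩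
      · subst heq
        cases hl : Handler.lookup H o with
        | some t =>
            obtain ⟨x, k, N⟩ := t
            obtain ⟨y, hy⟩ := Infinite.exists_notMem_finset (fvECtx E ∪ fvHandler H)
            exact Or.inl ⟨_, ECtx.hole, _, _, rfl, rfl, Reduce.handle hv hf hl hy⟩
        | none =>
            exact Or.inr (Or.inr ⟨ECtx.handle E H, o, v, hv, ⟨hl, hf⟩,
              ihH o ho hl, rfl⟩)
  case pair Γ M1 M2 A B ε h1 h2 ih1 ih2 =>
      intro hΔ
      rcases liftRes zeta ε (fun t => Term.pair t M2) (fun E => ECtx.pairL E M2)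
        (fun _ _ => rfl) (fun _ _ h => h) (ih1 hΔ) with hv1 | hp
      · rcases liftRes zeta ε (fun t => Term.pair M1 t) (fun E => ECtx.pairR M1 hv1 E)
          (fun _ _ => rfl) (fun _ _ h => h) (ih2 hΔ) with hv2 | hp
        · exact Or.inr (Or.inl (IsValue.pair hv1 hv2))
        · exact hp
      · exact hp
  case proj1 Γ M A B ε h ih =>
      intro hΔ
      rcases liftRes zeta ε Term.proj1 ECtx.proj1
        (fun _ _ => rfl) (fun _ _ h => h) (ih hΔ) with hv | hp
      · obtain ⟨v1, v2, rfl, h1, h2⟩ := canon_prod hconst h hv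
        exact Or.inl ⟨_, ECtx.hole, _, _, rfl, rfl, Reduce.proj1 h1 h2⟩
      · exact hp
  case proj2 Γ M A B ε h ih =>
      intro hΔ
      rcases liftRes zeta ε Term.proj2 ECtx.proj2
        (fun _ _ => rfl) (fun _ _ h => h) (ih hΔ) with hv | hp
      · obtain ⟨v1, v2, rfl, h1, h2⟩ := canon_prod hconst h hv
        exact Or.inl ⟨_, ECtx.hole, _, _, rfl, rfl, Reduce.proj2 h1 h2⟩
      · exact hp
  case inl Γ M A B ε h hB ih =>
      intro hΔ
      rcases liftRes zeta ε Term.inl ECtx.inl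
        (fun _ _ => rfl) (fun _ _ h => h) (ih hΔ) with hv | hp
      · exact Or.inr (Or.inl (IsValue.inl hv))
      · exact hp
  case inr Γ M A B ε h hA ih =>
      intro hΔ
      rcases liftRes zeta ε Term.inr ECtx.inr
        (fun _ _ => rfl) (fun _ _ h => h) (ih hΔ) with hv | hp
      · exact Or.inr (Or.inl (IsValue.inr hv))
      · exact hp
  case scase Γ M x M1 y M2 A B C ε h h1 h2 ih ih1 ih2 =>
      intro hΔ
      rcases liftRes zeta ε (fun t => Term.scase t x M1 y M2)
        (fun E => ECtx.scase E x M1 y M2)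
        (fun _ _ => rfl) (fun _ _ h => h) (ih hΔ) with hv | hp
      · rcases canon_sum hconst h hv with ⟨v', rfl, hv'⟩ | ⟨v', rfl, hv'⟩
        · exact Or.inl ⟨_, ECtx.hole, _, _, rfl, rfl, Reduce.caseL hv'⟩
        · exact Or.inl ⟨_, ECtx.hole, _, _, rfl, rfl, Reduce.caseR hv'⟩
      · exact hp
  case nil => exact fun _ => Or.inr (Or.inl IsValue.nil)
  case cons Γ M A ε h ih =>
      intro hΔ
      rcases liftRes zeta ε Term.cons ECtx.cons
        (fun _ _ => rfl) (fun _ _ h => h) (ih hΔ) with hv | hp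
      · exact Or.inr (Or.inl (IsValue.cons hv))
      · exact hp
  case lcase Γ M M1 x M2 A B ε h h1 h2 ih ih1 ih2 =>
      intro hΔ
      rcases liftRes zeta ε (fun t => Term.lcase t M1 x M2)
        (fun E => ECtx.lcase E M1 x M2)
        (fun _ _ => rfl) (fun _ _ h => h) (ih hΔ) with hv | hp
      · rcases canon_list hconst h hv with rfl | ⟨v', rfl, hv'⟩
        · exact Or.inl ⟨_, ECtx.hole, _, _, rfl, rfl, Reduce.lnil⟩
        · exact Or.inl ⟨_, ECtx.hole, _, _, rfl, rfl, Reduce.lcons hv'⟩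
      · exact hp
  case fix => exact fun _ => Or.inl ⟨_, ECtx.hole, _, _, rfl, rfl, Reduce.fix⟩
  case weak Γ M A ε ε' h hsub ih =>
      intro hΔ
      rcases ih hΔ with hs | hv | ⟨E, o, v, hv, hf, ho, heq⟩
      · exact Or.inl hs
      · exact Or.inr (Or.inl hv)
      · exact Or.inr (Or.inr ⟨E, o, v, hv, hf, hsub ho, heq⟩)
  case ret =>
      rename_i ho _
      exact Finset.mem_union_left _ ho
  case op =>
      rename_i H o x k M A B ε ε' hH
      intro hno hM ihH ihM o' ho' hl
      by_cases he : o = o'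
      · subst he; simp [Handler.lookup] at hl
      · simp only [Handler.lookup, if_neg he] at hl
        rcases Finset.mem_insert.mp ho' with h | h
        · exact absurd h.symm he
        · exact ihH o' h hl

end ProgressAux

/-- **Progress for the effect system**: if `Δ ⊢ M : A | ε` then either
`M` evaluates, or `M` is a value, or `M = E[#op(v)]` for some `op`-free `E`,
value `v`, and `op ∈ ε`. -/
theorem eff_progress
    (opty : ℕ → OpSig) (tyc : ℕ → Ty) (zeta : ℕ → ℕ → Option ℕ)
    (hconst : ConstAssum tyc zeta)
    (Δ : Ctx) (hΔ : TyVarOnly Δ)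
    (M : Term) (A : Ty) (ε : Effect)
    (ht : ETyping opty tyc Δ M A ε) :
    (∃ M', Step zeta M M') ∨ IsValue M ∨
      ∃ E o v, IsValue v ∧ opFree o E ∧ o ∈ ε ∧ M = plug E (Term.op o v) := by
  exact progress_aux hconst ht hΔ

end SigResEff
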